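/- arXiv:1507.06921 — 4 statements merged into one kernel-verified Lean document; each statement's English description precedes it below -/
import Mathlib

section
/- Let (X,d) be a locally compact metric space. Suppose there exists a compact set K ⊆ X such that the orbit of K under the isometry group of (X,d) is all of X, i.e., X = Isom(X,d) · K. Then (X,d) is a complete metric space. -/
/-!
Local compactness gives one radius `r > 0` such that all closed `r`-balls centred in the compact
set `K` are compact. Isometries map closed `r`-balls onto closed `r`-balls, so, as the orbit of `K`
covers `X`, this holds for every closed `r`-ball of `X`; a Cauchy filter eventually lives in one of them.
-/

open Metric Set Filter

theorem Metric.completeSpace_of_isComplete_closedBall {X : Type*} [PseudoMetricSpace X] {r : ℝ}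
    (hr : 0 < r) (h : ∀ x : X, IsComplete (closedBall x r)) : CompleteSpace X := by
  refine ⟨fun {f} hf => ?_⟩
  obtain ⟨s, hs, hdist⟩ := (Metric.cauchy_iff.1 hf).2 r hr
  obtain ⟨x, hx⟩ := hf.1.nonempty_of_mem hs
  have hball : closedBall x r ∈ f :=
    mem_of_superset hs fun y hy => mem_closedBall.2 (hdist y hy x hx).le
  obtain ⟨y, -, hy⟩ := h x f hf (le_principal_iff.2 hball)
  exact ⟨y, hy⟩

theorem IsCompact.exists_pos_forall_isCompact_closedBall {X : Type*} [PseudoMetricSpace X]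
    [LocallyCompactSpace X] {K : Set X} (hK : IsCompact K) :
    ∃ r > 0, ∀ k ∈ K, IsCompact (closedBall k r) := by
  obtain ⟨r, hr, hcomp⟩ := hK.exists_isCompact_cthickening
  exact ⟨r, hr, fun k hk =>
    hcomp.of_isClosed_subset isClosed_closedBall (closedBall_subset_cthickening hk r)⟩

/-- If `(X,d)` is a locally compact metric space and there is a compact
set `K ⊆ X` whose orbit under the isometry group of `X` is all of `X`, then `X` is a
complete metric space. -/
theorem stmt_0 {X : Type*} [MetricSpace X] [LocallyCompactSpace X]
    (K : Set X) (hK : IsCompact K)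
    (horbit : ∀ x : X, ∃ (g : X ≃ᵢ X) (k : X), k ∈ K ∧ g k = x) :
    CompleteSpace X := by
  obtain ⟨r, hr, hKr⟩ := hK.exists_pos_forall_isCompact_closedBall
  refine Metric.completeSpace_of_isComplete_closedBall hr fun x => ?_
  obtain ⟨g, k, hk, rfl⟩ := horbit x
  rw [← g.image_closedBall]
  exact ((hKr k hk).image g.continuous).isComplete
end

section
/- Let (X,d) be a locally compact metric space and K ⊆ X a compact set with X = Isom(X,d)·K. Then there exists δ > 0 such that for every x ∈ X the closed ball {y ∈ X : d(x,y) ≤ δ} is compact. -/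
/-- If `(X,d)` is a locally compact metric space and there is a compact
set `K ⊆ X` with `X = Isom(X,d) · K`, then there exists `δ > 0` such that every closed
ball of radius `δ` in `X` is compact. -/
theorem stmt_1 {X : Type*} [MetricSpace X] [LocallyCompactSpace X]
    (K : Set X) (hK : IsCompact K)
    (horbit : ∀ x : X, ∃ (g : X ≃ᵢ X) (k : X), k ∈ K ∧ g k = x) :
    ∃ δ : ℝ, 0 < δ ∧ ∀ x : X, IsCompact (Metric.closedBall x δ) := by
  obtain ⟨K', hK', hKK'⟩ := exists_compact_superset hK
  obtain ⟨δ, hδ, hsub⟩ := hK.exists_cthickening_subset_open isOpen_interior hKK'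
  refine ⟨δ, hδ, fun x => ?_⟩
  obtain ⟨g, k, hk, hgk⟩ := horbit x
  have h1 : IsCompact (Metric.closedBall k δ) := by
    refine hK'.of_isClosed_subset Metric.isClosed_closedBall ?_
    refine subset_trans ?_ (hsub.trans interior_subset)
    intro y hy
    exact Metric.mem_cthickening_of_dist_le y k δ K hk (by rwa [← Metric.mem_closedBall])
  have h2 : Metric.closedBall x δ = g '' Metric.closedBall k δ := by
    rw [← hgk, ← g.image_closedBall]
  rw [h2]
  exact h1.image g.continuous
end

section
/- Let V be a finite-dimensional real vector space, let Ω ⊆ P(V) and Ω* ⊆ P(V*) be nonempty sets with Ω* compact, such that for every [x] ∈ Ω and [f] ∈ Ω* we have f(x) ≠ 0. Define C(x,y) = sup over [f],[g] ∈ Ω* of (1/2)|log |(f(x)g(y))/(f(y)g(x))||. Then C satisfies the triangle inequality: C(x,y) ≤ C(x,z) + C(z,y) for all x, y, z ∈ Ω. -/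
open scoped LinearAlgebra.Projectivization
open Projectivization

/-- The quotient topology on a projectivization. -/
instance projTopology {K V : Type*} [DivisionRing K] [AddCommGroup V] [Module K V]
    [TopologicalSpace V] : TopologicalSpace (ℙ K V) :=
  inferInstanceAs (TopologicalSpace (Quotient (projectivizationSetoid K V)))

/-- `C(x,y) = sup_{[f],[g] ∈ Ω*} (1/2)|log|f(x)g(y)/(f(y)g(x))||`.  The quantity is
independent of the chosen representatives, so it is computed with `Projectivization.rep`. -/
noncomputable def crossDist {V : Type*} [NormedAddCommGroup V] [NormedSpace ℝ V]
    (Ωd : Set (ℙ ℝ (StrongDual ℝ V))) (x y : ℙ ℝ V) : ℝ :=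
  sSup {r : ℝ | ∃ f ∈ Ωd, ∃ g ∈ Ωd,
    r = (1/2) * |Real.log (abs ((f.rep x.rep * g.rep y.rep) / (f.rep y.rep * g.rep x.rep)))|}

/-!
The logarithm of the cross ratio splits as `L(f) - L(g)` with `L(f) = log (|f x| / |f y|)`, a
function on `ℙ(V*)` that is continuous wherever `f x, f y ≠ 0`, hence bounded on the compact
`Ω*`; so every supremum defining `C` is finite. Since `L` is additive along `x → z → y`, the
triangle inequality for `|·|` then passes to the suprema.
-/

namespace Projectivization

theorem isOpenQuotientMap_mk' {K E : Type*} [DivisionRing K] [AddCommGroup E] [Module K E]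
    [TopologicalSpace E] [ContinuousConstSMul K E] :
    IsOpenQuotientMap (mk' K : {v : E // v ≠ 0} → ℙ K E) := by
  refine ⟨fun p => ⟨⟨p.rep, p.rep_nonzero⟩, mk_rep p⟩, continuous_quot_mk, fun U hU => ?_⟩
  have hsat : mk' K ⁻¹' (mk' K '' U) =
      ⋃ c : Kˣ, (fun v : {v : E // v ≠ 0} => (⟨c • v.1, smul_ne_zero c.ne_zero v.2⟩ :
        {v : E // v ≠ 0})) ⁻¹' U := by
    ext v
    simp only [Set.mem_preimage, Set.mem_image, Set.mem_iUnion, mk'_eq_mk]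
    constructor
    · rintro ⟨u, hu, huv⟩
      obtain ⟨c, hc⟩ := (mk_eq_mk_iff K _ _ u.2 v.2).mp huv
      exact ⟨c, by rwa [show (⟨c • v.1, _⟩ : {v : E // v ≠ 0}) = u from Subtype.ext hc]⟩
    · rintro ⟨c, hc⟩
      exact ⟨_, hc, (mk_eq_mk_iff K _ _ _ _).mpr ⟨c, rfl⟩⟩
  change IsOpen (mk' K ⁻¹' (mk' K '' U))
  rw [hsat]
  exact isOpen_iUnion fun c =>
    hU.preimage <| ((continuous_const_smul c).comp continuous_subtype_val).subtype_mk
      fun v => smul_ne_zero c.ne_zero v.2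

end Projectivization

theorem Real.log_abs_mul_div_mul {a b c d : ℝ} (ha : a ≠ 0) (hb : b ≠ 0) (hc : c ≠ 0)
    (hd : d ≠ 0) :
    Real.log |a * d / (b * c)| = Real.log (|a| / |b|) - Real.log (|c| / |d|) := by
  have ha' := abs_ne_zero.mpr ha
  have hb' := abs_ne_zero.mpr hb
  have hc' := abs_ne_zero.mpr hc
  have hd' := abs_ne_zero.mpr hd
  rw [abs_div, abs_mul, abs_mul, Real.log_div (mul_ne_zero ha' hd') (mul_ne_zero hb' hc'),
    Real.log_mul ha' hd', Real.log_mul hb' hc', Real.log_div ha' hb', Real.log_div hc' hd']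
  ring

theorem Real.log_abs_div_abs_add {a b c : ℝ} (ha : a ≠ 0) (hb : b ≠ 0) (hc : c ≠ 0) :
    Real.log (|a| / |c|) + Real.log (|c| / |b|) = Real.log (|a| / |b|) := by
  rw [← Real.log_mul (by positivity) (by positivity), div_mul_div_cancel₀ (abs_ne_zero.mpr hc)]

section LogRatio

variable {V : Type*} [NormedAddCommGroup V] [NormedSpace ℝ V]

noncomputable def logRatio (u w : V) (f : ℙ ℝ (StrongDual ℝ V)) : ℝ :=
  Real.log (|f.rep u| / |f.rep w|)

theorem logRatio_mk (u w : V) (φ : StrongDual ℝ V) (hφ : φ ≠ 0) :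
    logRatio u w (mk ℝ φ hφ) = Real.log (|φ u| / |φ w|) := by
  obtain ⟨c, hc⟩ := exists_smul_eq_mk_rep ℝ φ hφ
  have hc0 := abs_ne_zero.mpr c.ne_zero
  rw [logRatio, ← hc]
  simp only [smul_apply, Units.smul_def, smul_eq_mul,
    abs_mul, mul_div_mul_left _ _ hc0]

theorem logRatio_add {u w t : V} {f : ℙ ℝ (StrongDual ℝ V)} (hu : f.rep u ≠ 0)
    (hw : f.rep w ≠ 0) (ht : f.rep t ≠ 0) :
    logRatio u t f + logRatio t w f = logRatio u w f :=
  Real.log_abs_div_abs_add hu hw ht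

theorem continuousAt_logRatio {u w : V} {f : ℙ ℝ (StrongDual ℝ V)} (hu : f.rep u ≠ 0)
    (hw : f.rep w ≠ 0) : ContinuousAt (logRatio u w) f := by
  rw [← show mk' ℝ ⟨f.rep, f.rep_nonzero⟩ = f from mk_rep f,
    ← isOpenQuotientMap_mk'.continuousAt_comp_iff]
  have hcomp : logRatio u w ∘ mk' ℝ =
      fun φ : {φ : StrongDual ℝ V // φ ≠ 0} => Real.log (|φ.1 u| / |φ.1 w|) :=
    funext fun φ => logRatio_mk u w φ.1 φ.2
  rw [hcomp]
  have heval : ∀ v : V, Continuous fun φ : {φ : StrongDual ℝ V // φ ≠ 0} => φ.1 v := fun v =>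
    (ContinuousLinearMap.apply ℝ ℝ v).continuous.comp continuous_subtype_val
  exact ((heval u).abs.continuousAt.div (heval w).abs.continuousAt (abs_ne_zero.mpr hw)).log
    (div_ne_zero (abs_ne_zero.mpr hu) (abs_ne_zero.mpr hw))

theorem IsCompact.exists_abs_logRatio_le {Ωd : Set (ℙ ℝ (StrongDual ℝ V))} (hΩd : IsCompact Ωd)
    {u w : V} (hu : ∀ f ∈ Ωd, f.rep u ≠ 0) (hw : ∀ f ∈ Ωd, f.rep w ≠ 0) :
    ∃ M, ∀ f ∈ Ωd, |logRatio u w f| ≤ M :=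
  hΩd.exists_bound_of_continuousOn fun f hf =>
    (continuousAt_logRatio (hu f hf) (hw f hf)).continuousWithinAt

end LogRatio

section CrossDist

variable {V : Type*} [NormedAddCommGroup V] [NormedSpace ℝ V] {Ωd : Set (ℙ ℝ (StrongDual ℝ V))}
  {x y : ℙ ℝ V}

theorem crossDist_nonneg : 0 ≤ crossDist Ωd x y :=
  Real.sSup_nonneg fun _ ⟨_, _, _, _, hr⟩ => hr ▸ by positivity

theorem half_abs_log_cross_ratio_eq {f g : ℙ ℝ (StrongDual ℝ V)} (hfx : f.rep x.rep ≠ 0)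
    (hfy : f.rep y.rep ≠ 0) (hgx : g.rep x.rep ≠ 0) (hgy : g.rep y.rep ≠ 0) :
    (1/2) * |Real.log (abs (f.rep x.rep * g.rep y.rep / (f.rep y.rep * g.rep x.rep)))| =
      (1/2) * |logRatio x.rep y.rep f - logRatio x.rep y.rep g| := by
  rw [Real.log_abs_mul_div_mul hfx hfy hgx hgy, logRatio, logRatio]

theorem crossDist_le {C : ℝ} (hC : 0 ≤ C) (hx : ∀ f ∈ Ωd, f.rep x.rep ≠ 0)
    (hy : ∀ f ∈ Ωd, f.rep y.rep ≠ 0)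
    (h : ∀ f ∈ Ωd, ∀ g ∈ Ωd, (1/2) * |logRatio x.rep y.rep f - logRatio x.rep y.rep g| ≤ C) :
    crossDist Ωd x y ≤ C := by
  refine Real.sSup_le ?_ hC
  rintro _ ⟨f, hf, g, hg, rfl⟩
  rw [half_abs_log_cross_ratio_eq (hx f hf) (hy f hf) (hx g hg) (hy g hg)]
  exact h f hf g hg

theorem le_crossDist (hΩd : IsCompact Ωd) (hx : ∀ f ∈ Ωd, f.rep x.rep ≠ 0)
    (hy : ∀ f ∈ Ωd, f.rep y.rep ≠ 0) {f g : ℙ ℝ (StrongDual ℝ V)} (hf : f ∈ Ωd) (hg : g ∈ Ωd) :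
    (1/2) * |logRatio x.rep y.rep f - logRatio x.rep y.rep g| ≤ crossDist Ωd x y := by
  obtain ⟨M, hM⟩ := hΩd.exists_abs_logRatio_le hx hy
  refine le_csSup ⟨M, ?_⟩ ⟨f, hf, g, hg, (half_abs_log_cross_ratio_eq (hx f hf) (hy f hf)
    (hx g hg) (hy g hg)).symm⟩
  rintro _ ⟨f', hf', g', hg', rfl⟩
  rw [half_abs_log_cross_ratio_eq (hx f' hf') (hy f' hf') (hx g' hg') (hy g' hg')]
  linarith [abs_sub (logRatio x.rep y.rep f') (logRatio x.rep y.rep g'), hM f' hf', hM g' hg']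

end CrossDist

theorem stmt_6_general {V : Type*} [NormedAddCommGroup V] [NormedSpace ℝ V]
    (Ω : Set (ℙ ℝ V)) (Ωd : Set (ℙ ℝ (StrongDual ℝ V)))
    (hΩdcpt : IsCompact Ωd)
    (hpair : ∀ x ∈ Ω, ∀ f ∈ Ωd, Projectivization.rep f (Projectivization.rep x) ≠ 0)
    (x y z : ℙ ℝ V) (hx : x ∈ Ω) (hy : y ∈ Ω) (hz : z ∈ Ω) :
    crossDist Ωd x y ≤ crossDist Ωd x z + crossDist Ωd z y := by
  refine crossDist_le (add_nonneg crossDist_nonneg crossDist_nonneg) (hpair x hx) (hpair y hy)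
    fun f hf g hg => ?_
  set L : ℙ ℝ V → ℙ ℝ V → ℙ ℝ (StrongDual ℝ V) → ℝ := fun a b => logRatio a.rep b.rep
  have hsplit : L x y f - L x y g = (L x z f - L x z g) + (L z y f - L z y g) := by
    simp only [L]
    rw [← logRatio_add (hpair x hx f hf) (hpair y hy f hf) (hpair z hz f hf),
      ← logRatio_add (hpair x hx g hg) (hpair y hy g hg) (hpair z hz g hg)]
    ring
  calc (1/2) * |L x y f - L x y g|
      ≤ (1/2) * |L x z f - L x z g| + (1/2) * |L z y f - L z y g| := by
        rw [hsplit]; linarith [abs_add_le (L x z f - L x z g) (L z y f - L z y g)]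
    _ ≤ crossDist Ωd x z + crossDist Ωd z y :=
        add_le_add (le_crossDist hΩdcpt (hpair x hx) (hpair z hz) hf hg)
          (le_crossDist hΩdcpt (hpair z hz) (hpair y hy) hf hg)

/-- Let `V` be a finite-dimensional real vector space, `Ω ⊆ P(V)` and
`Ω* ⊆ P(V*)` nonempty with `Ω*` compact, such that `f(x) ≠ 0` for all `[x] ∈ Ω`,
`[f] ∈ Ω*`.  Then `C` satisfies the triangle inequality on `Ω`. -/
theorem stmt_6 {V : Type*} [NormedAddCommGroup V] [NormedSpace ℝ V]
    [FiniteDimensional ℝ V]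
    (Ω : Set (ℙ ℝ V)) (Ωd : Set (ℙ ℝ (StrongDual ℝ V)))
    (hΩne : Ω.Nonempty) (hΩdne : Ωd.Nonempty) (hΩdcpt : IsCompact Ωd)
    (hpair : ∀ x ∈ Ω, ∀ f ∈ Ωd, Projectivization.rep f (Projectivization.rep x) ≠ 0)
    (x y z : ℙ ℝ V) (hx : x ∈ Ω) (hy : y ∈ Ω) (hz : z ∈ Ω) :
    crossDist Ωd x y ≤ crossDist Ωd x z + crossDist Ωd z y :=
  stmt_6_general Ω Ωd hΩdcpt hpair x y z hx hy hz
end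

section
/- Let V = ℝ^d, Ω ⊆ P(V) a proper domain (open, connected, with closure disjoint from some projective hyperplane), Ω* = {[f] ∈ P(V*) : f(x) ≠ 0 ∀ [x] ∈ Ω}, and C_Ω the associated supremum cross-ratio metric. If Ω is dual convex (every boundary point x ∈ ∂Ω satisfies ξ(x) = 0 for some [ξ] ∈ Ω*), then (Ω, C_Ω) is a complete metric space. -/
/-! Normalise representatives of a `C_Ω`-Cauchy sequence to the unit sphere and extract a
convergent subsequence; its limit `x` lies in the closure of `Ω`. If `x ∈ ∂Ω`, dual convexity
gives `[ξ] ∈ Ω*` with `ξ(x) = 0` and properness gives `[η] ∈ Ω*` with `η(x) ≠ 0`, so the cross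
ratio of `ξ, η` at `x₁, xₙ` makes `C_Ω(x₁, xₙ)` unbounded: hence `x ∈ Ω`. If the ball of radius `r`
about a representative `v` stays in the cone over `Ω`, then every `f ∈ Ω*` satisfies
`|f v| ≥ r ‖f‖`, so `log |f|` is `1/r`-Lipschitz near `v` uniformly in `f`. This makes `C_Ω`
finite and continuous on `Ω`, and a Cauchy sequence with a convergent subsequence converges. -/

open scoped LinearAlgebra.Projectivization
open Projectivization

open Filter Topology Metric

lemma Real.abs_log_sub_log_le {a b c : ℝ} (hc : 0 < c) (ha : c ≤ a) (hb : c ≤ b) :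
    |Real.log a - Real.log b| ≤ |a - b| / c := by
  have key : ∀ {x y : ℝ}, c ≤ x → c ≤ y → Real.log x - Real.log y ≤ |x - y| / c := by
    intro x y hx hy
    have hy0 : 0 < y := hc.trans_le hy
    calc Real.log x - Real.log y = Real.log (x / y) := (Real.log_div (by linarith) hy0.ne').symm
      _ ≤ x / y - 1 := Real.log_le_sub_one_of_pos (div_pos (by linarith) hy0)
      _ = (x - y) / y := by field_simp
      _ ≤ |x - y| / y := by gcongr; exact le_abs_self _
      _ ≤ |x - y| / c := by gcongr
  rw [abs_le]
  constructor
  · have := key hb ha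
    rw [abs_sub_comm] at this
    linarith
  · exact key ha hb

lemma Real.abs_log_mul_le (x y : ℝ) : |Real.log (x * y)| ≤ |Real.log x| + |Real.log y| := by
  rcases eq_or_ne x 0 with rfl | hx
  · simp
  rcases eq_or_ne y 0 with rfl | hy
  · simp
  rw [Real.log_mul hx hy]
  exact abs_add_le _ _

lemma ContinuousLinearMap.mul_norm_le_norm_apply_of_forall_ball
    {𝕜 E : Type*} [NontriviallyNormedField 𝕜] [NormedAddCommGroup E] [NormedSpace 𝕜 E]
    {f : StrongDual 𝕜 E} {w : E} {r : ℝ} (hr : 0 < r) (hf : ∀ z ∈ ball w r, f z ≠ 0) :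
    r * ‖f‖ ≤ ‖f w‖ := by
  rw [← le_div_iff₀' hr]
  refine f.opNorm_le_bound (by positivity) fun z ↦ ?_
  rcases eq_or_ne (f z) 0 with hz | hz
  · rw [hz, norm_zero]
    positivity
  have hker : f (w - (f w / f z) • z) = 0 := by
    simp [map_sub, map_smul, div_mul_cancel₀ _ hz]
  have hfar : r ≤ ‖(f w / f z) • z‖ := by
    by_contra! h
    exact hf _ (by simpa [dist_eq_norm] using h) hker
  rw [norm_smul, norm_div, div_mul_eq_mul_div, le_div_iff₀ (norm_pos_iff.2 hz)] at hfar
  rw [div_mul_eq_mul_div, le_div_iff₀ hr]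
  linarith

section Cone

variable {V : Type*} [NormedAddCommGroup V] [NormedSpace ℝ V]

lemma Projectivization.exists_rep_mk_eq_smul {W : Type*} [AddCommGroup W] [Module ℝ W]
    {v : W} (hv : v ≠ 0) : ∃ a : ℝ, a ≠ 0 ∧ (mk ℝ v hv).rep = a • v := by
  obtain ⟨a, ha⟩ := exists_smul_eq_mk_rep ℝ v hv
  exact ⟨a, a.ne_zero, ha.symm⟩

lemma Projectivization.apply_rep_mk_eq_zero_iff (f : StrongDual ℝ V) {v : V} (hv : v ≠ 0) :
    f (mk ℝ v hv).rep = 0 ↔ f v = 0 := by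
  obtain ⟨a, ha, hrep⟩ := exists_rep_mk_eq_smul hv
  simp [hrep, ha]

lemma Projectivization.rep_mk_apply_eq_zero_iff {f : StrongDual ℝ V} (hf : f ≠ 0) (v : V) :
    (mk ℝ f hf).rep v = 0 ↔ f v = 0 := by
  obtain ⟨a, ha, hrep⟩ := exists_rep_mk_eq_smul hf
  simp [hrep, ha]

def coneOver (Ω : Set (ℙ ℝ V)) : Set V := {v | ∃ hv : v ≠ 0, mk ℝ v hv ∈ Ω}

lemma continuous_projectivization_mk :
    Continuous (fun v : {v : V // v ≠ 0} ↦ mk ℝ v.1 v.2) :=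
  continuous_quotient_mk'

lemma isOpen_coneOver {Ω : Set (ℙ ℝ V)} (hΩ : IsOpen Ω) : IsOpen (coneOver Ω) := by
  have : coneOver Ω = Subtype.val '' ((fun v : {v : V // v ≠ 0} ↦ mk ℝ v.1 v.2) ⁻¹' Ω) := by
    ext v
    simp [coneOver]
  rw [this]
  exact isOpen_compl_singleton.isOpenMap_subtype_val _ (hΩ.preimage continuous_projectivization_mk)

lemma mk_mem_closure_of_tendsto {Ω : Set (ℙ ℝ V)} {w : ℕ → V} {z : V}
    (hw : ∀ n, w n ∈ coneOver Ω) (hlim : Tendsto w atTop (𝓝 z)) (hz : z ≠ 0) :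
    mk ℝ z hz ∈ closure Ω := by
  have hlim' : Tendsto (fun n ↦ (⟨w n, (hw n).1⟩ : {v : V // v ≠ 0})) atTop (𝓝 ⟨z, hz⟩) :=
    tendsto_subtype_rng.2 hlim
  exact mem_closure_of_tendsto ((continuous_projectivization_mk.tendsto _).comp hlim')
    (Eventually.of_forall fun n ↦ (hw n).2)

lemma smul_rep_mem_coneOver {Ω : Set (ℙ ℝ V)} {x : ℙ ℝ V} (hx : x ∈ Ω) {a : ℝ} (ha : a ≠ 0) :
    a • x.rep ∈ coneOver Ω := by
  refine ⟨smul_ne_zero ha x.rep_nonzero, ?_⟩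
  rwa [show mk ℝ (a • x.rep) _ = x from (mk_eq_mk_iff' ℝ _ _ _ x.rep_nonzero).2 ⟨a, rfl⟩ |>.trans
    x.mk_rep]

lemma rep_apply_ne_zero_of_mem_coneOver {Ω : Set (ℙ ℝ V)} {f : ℙ ℝ (StrongDual ℝ V)}
    (hf : ∀ x ∈ Ω, f.rep x.rep ≠ 0) {z : V} (hz : z ∈ coneOver Ω) : f.rep z ≠ 0 :=
  mt (apply_rep_mk_eq_zero_iff f.rep hz.1).2 (hf _ hz.2)

end Cone

section CrossRatio

variable {V : Type*} [NormedAddCommGroup V] [NormedSpace ℝ V]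

noncomputable def crossRatioLog (f g : StrongDual ℝ V) (v w : V) : ℝ :=
  (1/2) * |Real.log (abs ((f v * g w) / (f w * g v)))|

lemma crossRatioLog_nonneg (f g : StrongDual ℝ V) (v w : V) : 0 ≤ crossRatioLog f g v w := by
  unfold crossRatioLog
  positivity

lemma crossRatioLog_smul (f g : StrongDual ℝ V) (v w : V) {a b : ℝ} (ha : a ≠ 0) (hb : b ≠ 0) :
    crossRatioLog f g (a • v) (b • w) = crossRatioLog f g v w := by
  unfold crossRatioLog
  simp only [map_smul, smul_eq_mul]
  rw [show a * f v * (b * g w) = (a * b) * (f v * g w) by ring,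
    show b * f w * (a * g v) = (a * b) * (f w * g v) by ring,
    mul_div_mul_left _ _ (mul_ne_zero ha hb)]

lemma crossRatioLog_eq {f g : StrongDual ℝ V} {v w : V} (hfv : f v ≠ 0) (hfw : f w ≠ 0)
    (hgv : g v ≠ 0) (hgw : g w ≠ 0) :
    crossRatioLog f g v w = (1/2) *
      |(Real.log (f v) - Real.log (f w)) - (Real.log (g v) - Real.log (g w))| := by
  simp only [crossRatioLog, Real.log_abs]
  rw [Real.log_div (mul_ne_zero hfv hgw) (mul_ne_zero hfw hgv), Real.log_mul hfv hgw,
    Real.log_mul hfw hgv]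
  ring_nf

lemma crossRatioLog_le_add {f g : StrongDual ℝ V} {v u w : V} (hfu : f u ≠ 0) (hgu : g u ≠ 0) :
    crossRatioLog f g v w ≤ crossRatioLog f g v u + crossRatioLog f g u w := by
  have hmul : f v * g w / (f w * g v) = (f v * g u / (f u * g v)) * (f u * g w / (f w * g u)) := by
    rw [div_mul_div_comm,
      show f v * g u * (f u * g w) = (f u * g u) * (f v * g w) by ring,
      show f u * g v * (f w * g u) = (f u * g u) * (f w * g v) by ring,
      mul_div_mul_left _ _ (mul_ne_zero hfu hgu)]
  simp only [crossRatioLog, Real.log_abs]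
  rw [hmul, ← mul_add]
  gcongr
  exact Real.abs_log_mul_le _ _

lemma abs_log_apply_sub_log_apply_le {f : StrongDual ℝ V} (hf : f ≠ 0) {v w : V} {r : ℝ}
    (hr : 0 < r) (hv : r * ‖f‖ ≤ |f v|) (hw : r * ‖f‖ ≤ |f w|) :
    |Real.log (f v) - Real.log (f w)| ≤ ‖v - w‖ / r := by
  have hrf : 0 < r * ‖f‖ := mul_pos hr (norm_pos_iff.2 hf)
  rw [← Real.log_abs (f v), ← Real.log_abs (f w)]
  calc abs (Real.log |f v| - Real.log |f w|)
      ≤ abs (|f v| - |f w|) / (r * ‖f‖) := Real.abs_log_sub_log_le hrf hv hw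
    _ ≤ ‖f‖ * ‖v - w‖ / (r * ‖f‖) := by
        gcongr
        calc abs (|f v| - |f w|) ≤ |f v - f w| := abs_abs_sub_abs_le_abs_sub _ _
          _ = ‖f (v - w)‖ := by rw [map_sub, Real.norm_eq_abs]
          _ ≤ ‖f‖ * ‖v - w‖ := f.le_opNorm _
    _ = ‖v - w‖ / r := by field_simp [(norm_pos_iff.2 hf).ne']

lemma crossRatioLog_le_of_ball_subset {K : Set V} {f g : StrongDual ℝ V}
    (hf : ∀ z ∈ K, f z ≠ 0) (hg : ∀ z ∈ K, g z ≠ 0) {v w : V} {r : ℝ} (hr : 0 < r)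
    (hv : ball v r ⊆ K) (hw : ball w r ⊆ K) :
    crossRatioLog f g v w ≤ ‖v - w‖ / r := by
  have hvK : v ∈ K := hv (mem_ball_self hr)
  have hwK : w ∈ K := hw (mem_ball_self hr)
  have hbound : ∀ h : StrongDual ℝ V, (∀ z ∈ K, h z ≠ 0) →
      |Real.log (h v) - Real.log (h w)| ≤ ‖v - w‖ / r := by
    intro h hh
    have lower : ∀ u, ball u r ⊆ K → r * ‖h‖ ≤ |h u| := fun u hu ↦ by
      simpa only [Real.norm_eq_abs] using
        h.mul_norm_le_norm_apply_of_forall_ball hr fun z hz ↦ hh z (hu hz)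
    exact abs_log_apply_sub_log_apply_le (fun h0 ↦ hh v hvK (by simp [h0])) hr
      (lower v hv) (lower w hw)
  rw [crossRatioLog_eq (hf v hvK) (hf w hwK) (hg v hvK) (hg w hwK)]
  calc (1/2) * |(Real.log (f v) - Real.log (f w)) - (Real.log (g v) - Real.log (g w))|
      ≤ (1/2) * (‖v - w‖ / r + ‖v - w‖ / r) := by
        gcongr
        exact (abs_sub _ _).trans (add_le_add (hbound f hf) (hbound g hg))
    _ = ‖v - w‖ / r := by ring

end CrossRatio

section CrossDistRep

variable {V : Type*} [NormedAddCommGroup V] [NormedSpace ℝ V] {Ωd : Set (ℙ ℝ (StrongDual ℝ V))}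

noncomputable def crossDistRep (Ωd : Set (ℙ ℝ (StrongDual ℝ V))) (v w : V) : ℝ :=
  sSup {r : ℝ | ∃ f ∈ Ωd, ∃ g ∈ Ωd, r = crossRatioLog f.rep g.rep v w}

lemma crossDist_eq_crossDistRep (x y : ℙ ℝ V) :
    crossDist Ωd x y = crossDistRep Ωd x.rep y.rep := rfl

lemma crossDistRep_smul (v w : V) {a b : ℝ} (ha : a ≠ 0) (hb : b ≠ 0) :
    crossDistRep Ωd (a • v) (b • w) = crossDistRep Ωd v w := by
  simp only [crossDistRep, crossRatioLog_smul _ _ _ _ ha hb]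

lemma crossDistRep_smul_left {v : V} (w : V) {a : ℝ} (ha : a ≠ 0) :
    crossDistRep Ωd (a • v) w = crossDistRep Ωd v w := by
  simpa using crossDistRep_smul (Ωd := Ωd) v w ha one_ne_zero

lemma crossDist_mk (x : ℙ ℝ V) {w : V} (hw : w ≠ 0) :
    crossDist Ωd x (mk ℝ w hw) = crossDistRep Ωd x.rep w := by
  obtain ⟨a, ha, hrep⟩ := exists_rep_mk_eq_smul hw
  rw [crossDist_eq_crossDistRep, hrep]
  simpa using crossDistRep_smul (Ωd := Ωd) x.rep w one_ne_zero ha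

lemma crossDistRep_nonneg (v w : V) : 0 ≤ crossDistRep Ωd v w :=
  Real.sSup_nonneg <| by
    rintro _ ⟨f, -, g, -, rfl⟩
    exact crossRatioLog_nonneg _ _ _ _

lemma crossDistRep_le (hne : Ωd.Nonempty) {v w : V} {B : ℝ}
    (h : ∀ f ∈ Ωd, ∀ g ∈ Ωd, crossRatioLog f.rep g.rep v w ≤ B) : crossDistRep Ωd v w ≤ B := by
  obtain ⟨f, hf⟩ := hne
  refine csSup_le ⟨_, f, hf, f, hf, rfl⟩ ?_
  rintro _ ⟨f, hf, g, hg, rfl⟩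
  exact h f hf g hg

variable {K : Set V}

lemma crossDistRep_le_of_ball_subset (hΩdK : ∀ f ∈ Ωd, ∀ z ∈ K, f.rep z ≠ 0)
    (hne : Ωd.Nonempty) {v w : V} {r : ℝ} (hr : 0 < r)
    (hv : ball v r ⊆ K) (hw : ball w r ⊆ K) : crossDistRep Ωd v w ≤ ‖v - w‖ / r :=
  crossDistRep_le hne fun f hf g hg ↦
    crossRatioLog_le_of_ball_subset (hΩdK f hf) (hΩdK g hg) hr hv hw

lemma crossRatioLog_le_crossDistRep (hΩdK : ∀ f ∈ Ωd, ∀ z ∈ K, f.rep z ≠ 0) (hK : IsOpen K)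
    {v w : V} (hv : v ∈ K) (hw : w ∈ K)
    {f g : ℙ ℝ (StrongDual ℝ V)} (hf : f ∈ Ωd) (hg : g ∈ Ωd) :
    crossRatioLog f.rep g.rep v w ≤ crossDistRep Ωd v w := by
  obtain ⟨r₁, hr₁, hballv⟩ := Metric.isOpen_iff.1 hK v hv
  obtain ⟨r₂, hr₂, hballw⟩ := Metric.isOpen_iff.1 hK w hw
  refine le_csSup ⟨‖v - w‖ / min r₁ r₂, ?_⟩ ⟨f, hf, g, hg, rfl⟩
  rintro _ ⟨f, hf, g, hg, rfl⟩
  exact crossRatioLog_le_of_ball_subset (hΩdK f hf) (hΩdK g hg) (lt_min hr₁ hr₂)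
    ((ball_subset_ball (min_le_left _ _)).trans hballv)
    ((ball_subset_ball (min_le_right _ _)).trans hballw)

lemma crossDistRep_triangle (hΩdK : ∀ f ∈ Ωd, ∀ z ∈ K, f.rep z ≠ 0) (hK : IsOpen K)
    (hne : Ωd.Nonempty) {v u w : V} (hv : v ∈ K) (hu : u ∈ K) (hw : w ∈ K) :
    crossDistRep Ωd v w ≤ crossDistRep Ωd v u + crossDistRep Ωd u w :=
  crossDistRep_le hne fun f hf g hg ↦
    (crossRatioLog_le_add (hΩdK f hf u hu) (hΩdK g hg u hu)).trans <| add_le_add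
      (crossRatioLog_le_crossDistRep hΩdK hK hv hu hf hg)
      (crossRatioLog_le_crossDistRep hΩdK hK hu hw hf hg)

lemma tendsto_crossDistRep_of_tendsto (hΩdK : ∀ f ∈ Ωd, ∀ z ∈ K, f.rep z ≠ 0)
    (hK : IsOpen K) (hne : Ωd.Nonempty) {ι : Type*} {l : Filter ι} {w : ι → V} {z : V}
    (hz : z ∈ K) (hlim : Tendsto w l (𝓝 z)) :
    Tendsto (fun n ↦ crossDistRep Ωd (w n) z) l (𝓝 0) := by
  obtain ⟨r, hr, hball⟩ := Metric.isOpen_iff.1 hK z hz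
  have hr2 : 0 < r / 2 := half_pos hr
  have hbound : ∀ᶠ n in l, crossDistRep Ωd (w n) z ≤ ‖w n - z‖ / (r / 2) := by
    filter_upwards [hlim (ball_mem_nhds z hr2)] with n hn
    refine crossDistRep_le_of_ball_subset hΩdK hne hr2 ?_
      ((ball_subset_ball (by linarith)).trans hball)
    refine (ball_subset_ball' ?_).trans hball
    have hn' : dist (w n) z < r / 2 := hn
    linarith
  have hnorm : Tendsto (fun n ↦ ‖w n - z‖ / (r / 2)) l (𝓝 0) := by
    simpa using ((tendsto_iff_norm_sub_tendsto_zero.1 hlim).div_const (r / 2))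
  exact squeeze_zero' (Eventually.of_forall fun n ↦ crossDistRep_nonneg _ _) hbound hnorm

lemma tendsto_crossDistRep_atTop (hΩdK : ∀ f ∈ Ωd, ∀ z ∈ K, f.rep z ≠ 0) (hK : IsOpen K)
    {ι : Type*} {l : Filter ι} {w : ι → V} {y z : V} (hy : y ∈ K) (hw : ∀ n, w n ∈ K)
    (hlim : Tendsto w l (𝓝 z)) {ξ η : ℙ ℝ (StrongDual ℝ V)} (hξ : ξ ∈ Ωd) (hη : η ∈ Ωd)
    (hξz : ξ.rep z = 0) (hηz : η.rep z ≠ 0) :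
    Tendsto (fun n ↦ crossDistRep Ωd y (w n)) l atTop := by
  have hnum : Tendsto (fun n ↦ |ξ.rep y * η.rep (w n)|) l (𝓝 |ξ.rep y * η.rep z|) :=
    (((η.rep.continuous.tendsto z).comp hlim).const_mul _).abs
  have hden : Tendsto (fun n ↦ |ξ.rep (w n) * η.rep y|) l (𝓝[>] 0) := by
    refine tendsto_nhdsWithin_iff.2 ⟨?_, Eventually.of_forall fun n ↦ ?_⟩
    · simpa [hξz] using (((ξ.rep.continuous.tendsto z).comp hlim).mul_const (η.rep y)).abs
    · exact abs_pos.2 (mul_ne_zero (hΩdK ξ hξ _ (hw n)) (hΩdK η hη y hy))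
  have hratio : Tendsto (fun n ↦ |ξ.rep y * η.rep (w n) / (ξ.rep (w n) * η.rep y)|) l atTop := by
    refine (hnum.pos_mul_atTop (abs_pos.2 (mul_ne_zero (hΩdK ξ hξ y hy) hηz))
      hden.inv_tendsto_nhdsGT_zero).congr fun n ↦ ?_
    rw [abs_div, div_eq_mul_inv]
    rfl
  refine tendsto_atTop_mono (fun n ↦ ?_)
    ((Real.tendsto_log_atTop.comp hratio).const_mul_atTop one_half_pos)
  exact (mul_le_mul_of_nonneg_left (le_abs_self _) one_half_pos.le).trans
    (crossRatioLog_le_crossDistRep hΩdK hK hy (hw n) hξ hη)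

lemma tendsto_crossDistRep_of_cauchy_of_subseq (hΩdK : ∀ f ∈ Ωd, ∀ z ∈ K, f.rep z ≠ 0)
    (hK : IsOpen K) (hne : Ωd.Nonempty) {v : ℕ → V} (hv : ∀ n, v n ∈ K) {z : V} (hz : z ∈ K)
    (hcauchy : ∀ ε : ℝ, 0 < ε → ∃ N : ℕ, ∀ m ≥ N, ∀ n ≥ N, crossDistRep Ωd (v m) (v n) < ε)
    {φ : ℕ → ℕ} (hφ : StrictMono φ)
    (hsub : Tendsto (fun k ↦ crossDistRep Ωd (v (φ k)) z) atTop (𝓝 0)) :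
    Tendsto (fun n ↦ crossDistRep Ωd (v n) z) atTop (𝓝 0) := by
  rw [Metric.tendsto_atTop]
  intro ε hε
  obtain ⟨N, hN⟩ := hcauchy (ε / 2) (half_pos hε)
  obtain ⟨k, hk, hkN⟩ :=
    ((hsub.eventually (gt_mem_nhds (half_pos hε))).and (eventually_ge_atTop N)).exists
  refine ⟨N, fun n hn ↦ ?_⟩
  rw [Real.dist_0_eq_abs, abs_of_nonneg (crossDistRep_nonneg _ _)]
  calc crossDistRep Ωd (v n) z ≤ crossDistRep Ωd (v n) (v (φ k)) + crossDistRep Ωd (v (φ k)) z :=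
        crossDistRep_triangle hΩdK hK hne (hv n) (hv (φ k)) hz
    _ < ε / 2 + ε / 2 := add_lt_add (hN n hn (φ k) (hkN.trans hφ.le_apply)) hk
    _ = ε := add_halves ε

lemma mem_coneOver_of_cauchy_of_tendsto {Ω : Set (ℙ ℝ V)} (hopen : IsOpen Ω)
    (hΩdK : ∀ f ∈ Ωd, ∀ z ∈ coneOver Ω, f.rep z ≠ 0)
    (hdualconvex : ∀ x ∈ frontier Ω, ∃ ξ ∈ Ωd, ξ.rep x.rep = 0)
    {η : ℙ ℝ (StrongDual ℝ V)} (hη : η ∈ Ωd) (hηΩ : ∀ x ∈ closure Ω, η.rep x.rep ≠ 0)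
    {v : ℕ → V} (hv : ∀ n, v n ∈ coneOver Ω)
    (hcauchy : ∀ ε : ℝ, 0 < ε → ∃ N : ℕ, ∀ m ≥ N, ∀ n ≥ N, crossDistRep Ωd (v m) (v n) < ε)
    {φ : ℕ → ℕ} (hφ : StrictMono φ) {z : V} (hlim : Tendsto (v ∘ φ) atTop (𝓝 z))
    (hz : z ≠ 0) : z ∈ coneOver Ω := by
  by_contra hzK
  have hzcl := mk_mem_closure_of_tendsto (fun k ↦ hv (φ k)) hlim hz
  obtain ⟨ξ, hξ, hξz⟩ := hdualconvex _ ⟨hzcl, by rw [hopen.interior_eq]; exact fun h ↦ hzK ⟨hz, h⟩⟩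
  obtain ⟨N, hN⟩ := hcauchy 1 one_pos
  have hblow := tendsto_crossDistRep_atTop hΩdK (isOpen_coneOver hopen) (hv N)
    (fun k ↦ hv (φ k)) hlim hξ hη ((apply_rep_mk_eq_zero_iff _ hz).1 hξz)
    (mt (apply_rep_mk_eq_zero_iff _ hz).2 (hηΩ _ hzcl))
  obtain ⟨k, hk, hkN⟩ := ((hblow.eventually_ge_atTop 1).and (eventually_ge_atTop N)).exists
  exact (hN N le_rfl (φ k) (hkN.trans hφ.le_apply)).not_ge hk

end CrossDistRep

theorem stmt_12_general (d : ℕ)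
    (Ω : Set (ℙ ℝ (Fin d → ℝ))) (hopen : IsOpen Ω)
    (hproper : ∃ η : StrongDual ℝ (Fin d → ℝ), η ≠ 0 ∧
      ∀ x ∈ closure Ω, η (Projectivization.rep x) ≠ 0)
    (Ωd : Set (ℙ ℝ (StrongDual ℝ (Fin d → ℝ))))
    (hΩd : Ωd = {φ : ℙ ℝ (StrongDual ℝ (Fin d → ℝ)) |
      ∀ x ∈ Ω, Projectivization.rep φ (Projectivization.rep x) ≠ 0})
    (hdualconvex : ∀ x ∈ frontier Ω, ∃ ξ ∈ Ωd,
      Projectivization.rep ξ (Projectivization.rep x) = 0) :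
    ∀ u : ℕ → ℙ ℝ (Fin d → ℝ), (∀ n, u n ∈ Ω) →
      (∀ ε : ℝ, 0 < ε → ∃ N : ℕ, ∀ m ≥ N, ∀ n ≥ N, crossDist Ωd (u m) (u n) < ε) →
      ∃ x ∈ Ω, Filter.Tendsto (fun n => crossDist Ωd (u n) x) Filter.atTop (nhds 0) := by
  intro u hu hC
  obtain ⟨η, hη, hηΩ⟩ := hproper
  have hK : IsOpen (coneOver Ω) := isOpen_coneOver hopen
  have hΩdK : ∀ f ∈ Ωd, ∀ z ∈ coneOver Ω, f.rep z ≠ 0 := fun f hf _ hz ↦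
    rep_apply_ne_zero_of_mem_coneOver (by rw [hΩd] at hf; exact hf) hz
  have hη₀Ω : ∀ x ∈ closure Ω, (mk ℝ η hη).rep x.rep ≠ 0 :=
    fun x hx ↦ mt (rep_mk_apply_eq_zero_iff hη _).1 (hηΩ x hx)
  have hη₀ : mk ℝ η hη ∈ Ωd := hΩd ▸ fun x hx ↦ hη₀Ω x (subset_closure hx)
  have hinv : ∀ n, ‖(u n).rep‖⁻¹ ≠ 0 := fun n ↦ inv_ne_zero (norm_ne_zero_iff.2 (u n).rep_nonzero)
  set v : ℕ → Fin d → ℝ := fun n ↦ ‖(u n).rep‖⁻¹ • (u n).rep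
  have hvK : ∀ n, v n ∈ coneOver Ω := fun n ↦ smul_rep_mem_coneOver (hu n) (hinv n)
  have hcauchy : ∀ ε : ℝ, 0 < ε → ∃ N : ℕ, ∀ m ≥ N, ∀ n ≥ N,
      crossDistRep Ωd (v m) (v n) < ε := by
    simpa only [v, crossDistRep_smul _ _ (hinv _) (hinv _), ← crossDist_eq_crossDistRep] using hC
  obtain ⟨z, hz, φ, hφ, hlim⟩ := (isCompact_sphere (0 : Fin d → ℝ) 1).tendsto_subseq
    (x := v) fun n ↦ by simp [v, norm_smul, inv_mul_cancel₀ (norm_ne_zero_iff.2 (u n).rep_nonzero)]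
  have hz0 : z ≠ 0 := ne_zero_of_mem_sphere one_ne_zero ⟨z, hz⟩
  have hzK : z ∈ coneOver Ω :=
    mem_coneOver_of_cauchy_of_tendsto hopen hΩdK hdualconvex hη₀ hη₀Ω hvK hcauchy hφ hlim hz0
  refine ⟨mk ℝ z hz0, hzK.2, ?_⟩
  have hconv := tendsto_crossDistRep_of_cauchy_of_subseq hΩdK hK ⟨_, hη₀⟩ hvK hzK hcauchy hφ
    (tendsto_crossDistRep_of_tendsto hΩdK hK ⟨_, hη₀⟩ hzK hlim)
  simpa only [crossDist_mk, v, crossDistRep_smul_left _ (hinv _)] using hconv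

/-- Let `V = ℝ^d` and let `Ω ⊆ P(V)` be a proper domain: open,
connected, and with closure disjoint from the projective hyperplane of some nonzero
functional `η`.  If `Ω` is dual convex (every boundary point is annihilated by some
element of `Ω*`), then `(Ω, C_Ω)` is a complete metric space: every `C_Ω`-Cauchy sequence
in `Ω` converges with respect to `C_Ω` to a point of `Ω`. -/
theorem stmt_12 (d : ℕ)
    (Ω : Set (ℙ ℝ (Fin d → ℝ))) (hopen : IsOpen Ω) (hconn : IsConnected Ω)
    (hproper : ∃ η : StrongDual ℝ (Fin d → ℝ), η ≠ 0 ∧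
      ∀ x ∈ closure Ω, η (Projectivization.rep x) ≠ 0)
    (Ωd : Set (ℙ ℝ (StrongDual ℝ (Fin d → ℝ))))
    (hΩd : Ωd = {φ : ℙ ℝ (StrongDual ℝ (Fin d → ℝ)) |
      ∀ x ∈ Ω, Projectivization.rep φ (Projectivization.rep x) ≠ 0})
    (hdualconvex : ∀ x ∈ frontier Ω, ∃ ξ ∈ Ωd,
      Projectivization.rep ξ (Projectivization.rep x) = 0) :
    ∀ u : ℕ → ℙ ℝ (Fin d → ℝ), (∀ n, u n ∈ Ω) →
      (∀ ε : ℝ, 0 < ε → ∃ N : ℕ, ∀ m ≥ N, ∀ n ≥ N, crossDist Ωd (u m) (u n) < ε) →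
      ∃ x ∈ Ω, Filter.Tendsto (fun n => crossDist Ωd (u n) x) Filter.atTop (nhds 0) :=
  stmt_12_general d Ω hopen hproper Ωd hΩd hdualconvex
end
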